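/- Let n ≥ 1 and let J : ZMod n → ℝ with J k ∈ {1, −1} for all k. Then the maximum over all x : ZMod n → ℝ with (∀ k, x k = 1 ∨ x k = −1) of C(x) = Σ_{k∈ZMod n} J k · (x k) · (x (k+1)) equals n if ∏_{k∈ZMod n} J k = 1, and equals n − 2 if ∏_{k∈ZMod n} J k = −1. -/

import Mathlib

/-!
Each bond `J k * x k * x (k + 1)` is `±1`, and since every spin occurs in exactly two bonds,
the product of all bonds is `∏ k, J k` whatever `x` is. So when `∏ k, J k = -1` some bond is
violated, and in every case the energy is at most `n - 1 + ∏ k, J k`. The gauge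
`x k = J 0 * ⋯ * J (k - 1)` satisfies every bond except the one closing the cycle, whose value
is `∏ k, J k`, so the bound is attained.
-/

open Finset

@[to_additive]
theorem ZMod.prod_univ_eq_prod_range {M : Type*} [CommMonoid M] (n : ℕ) [NeZero n]
    (f : ZMod n → M) : ∏ k, f k = ∏ i ∈ range n, f i :=
  prod_nbij' ZMod.val Nat.cast (fun k _ => mem_range.2 k.val_lt) (fun _ _ => mem_univ _)
    (fun k _ => ZMod.natCast_zmod_val k) (fun _ hi => ZMod.val_natCast_of_lt (mem_range.1 hi))
    (fun k _ => by rw [ZMod.natCast_zmod_val])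

theorem prod_mul_mul_add_eq_prod {G M : Type*} [AddGroup G] [Fintype G] [CommMonoid M]
    (J x : G → M) (hx : ∀ k, x k * x k = 1) (a : G) :
    ∏ k, J k * x k * x (k + a) = ∏ k, J k := by
  have hshift : ∏ k, x (k + a) = ∏ k, x k := Equiv.prod_comp (Equiv.addRight a) x
  rw [prod_mul_distrib, prod_mul_distrib, hshift, mul_assoc, ← prod_mul_distrib,
    prod_eq_one fun k _ => hx k, mul_one]

theorem sum_le_card_sub_one_add_prod {ι : Type*} [Fintype ι] (b : ι → ℝ)
    (hb : ∀ i, b i * b i = 1) : ∑ i, b i ≤ Fintype.card ι - 1 + ∏ i, b i := by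
  classical
  have hle : ∀ i, b i ≤ 1 := fun i => by
    rcases mul_self_eq_one_iff.1 (hb i) with h | h <;> linarith
  obtain hall | ⟨i₀, hi₀⟩ := forall_or_exists_not fun i => b i = 1
  · simp [hall]
  have hneg : b i₀ = -1 := (mul_self_eq_one_iff.1 (hb i₀)).resolve_left hi₀
  have hprod : -1 ≤ ∏ i, b i := by
    have hsq : (∏ i, b i) * ∏ i, b i = 1 := by
      rw [← prod_mul_distrib, prod_eq_one fun i _ => hb i]
    rcases mul_self_eq_one_iff.1 hsq with h | h <;> linarith
  have hrest : ∑ i ∈ univ.erase i₀, b i ≤ Fintype.card ι - 1 := by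
    calc ∑ i ∈ univ.erase i₀, b i ≤ #(univ.erase i₀) • (1 : ℝ) :=
          sum_le_card_nsmul _ _ _ fun i _ => hle i
      _ = Fintype.card ι - 1 := by
          rw [card_erase_of_mem (mem_univ _), nsmul_one, card_univ,
            Nat.cast_pred (Fintype.card_pos_iff.2 ⟨i₀⟩)]
  rw [← add_sum_erase _ _ (mem_univ i₀), hneg]
  linarith

def cycleGauge {R : Type*} [CommMonoid R] {m : ℕ} (J : ZMod (m + 1) → R) (k : ZMod (m + 1)) :
    R :=
  ∏ i ∈ range k.val, J i

theorem cycleGauge_mul_self {R : Type*} [CommMonoid R] {m : ℕ} {J : ZMod (m + 1) → R}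
    (hJ : ∀ k, J k * J k = 1) (k : ZMod (m + 1)) : cycleGauge J k * cycleGauge J k = 1 := by
  rw [cycleGauge, ← prod_mul_distrib, prod_eq_one fun i _ => hJ _]

theorem sum_mul_cycleGauge {R : Type*} [CommRing R] {m : ℕ} {J : ZMod (m + 1) → R}
    (hJ : ∀ k, J k * J k = 1) :
    ∑ k, J k * cycleGauge J k * cycleGauge J (k + 1) = m + ∏ k, J k := by
  have hbond : ∀ i < m, J i * cycleGauge J i * cycleGauge J (i + 1) = 1 := by
    intro i hi
    have hval : ∀ j ≤ m, (j : ZMod (m + 1)).val = j := fun j hj =>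
      ZMod.val_natCast_of_lt (by omega)
    have hsucc : cycleGauge J ((i : ZMod (m + 1)) + 1) = cycleGauge J i * J i := by
      rw [← Nat.cast_succ, cycleGauge, cycleGauge, hval _ hi, hval _ hi.le, prod_range_succ]
    rw [hsucc]
    linear_combination cycleGauge J i * cycleGauge J i * hJ i + cycleGauge_mul_self hJ i
  have hlast : J m * cycleGauge J m * cycleGauge J (m + 1) = ∏ k, J k := by
    have hwrap : ((m : ZMod (m + 1)) + 1) = 0 := by
      rw [← Nat.cast_succ, ZMod.natCast_self]
    rw [hwrap, ZMod.prod_univ_eq_prod_range, prod_range_succ, cycleGauge, cycleGauge,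
      ZMod.val_natCast_of_lt (Nat.lt_succ_self m), ZMod.val_zero, prod_range_zero, mul_one,
      mul_comm]
  rw [ZMod.sum_univ_eq_sum_range, sum_range_succ, hlast,
    sum_congr rfl fun i hi => hbond i (mem_range.1 hi)]
  simp

theorem isGreatest_cycle_energy (n : ℕ) [NeZero n] (J : ZMod n → ℝ) (hJ : ∀ k, J k * J k = 1) :
    IsGreatest {c : ℝ | ∃ x : ZMod n → ℝ, (∀ k, x k = 1 ∨ x k = -1) ∧
      c = ∑ k : ZMod n, J k * x k * x (k + 1)} (n - 1 + ∏ k, J k) := by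
  obtain ⟨m, rfl⟩ : ∃ m, n = m + 1 := Nat.exists_eq_succ_of_ne_zero (NeZero.ne n)
  refine ⟨⟨cycleGauge J, fun k => mul_self_eq_one_iff.1 (cycleGauge_mul_self hJ k), ?_⟩, ?_⟩
  · rw [sum_mul_cycleGauge hJ]
    push_cast
    ring
  rintro c ⟨x, hx, rfl⟩
  have hxx : ∀ k, x k * x k = 1 := fun k => mul_self_eq_one_iff.2 (hx k)
  have hbond : ∀ k, J k * x k * x (k + 1) * (J k * x k * x (k + 1)) = 1 := fun k => by
    linear_combination x k * x k * (x (k + 1) * x (k + 1)) * hJ k +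
      x (k + 1) * x (k + 1) * hxx k + hxx (k + 1)
  calc ∑ k, J k * x k * x (k + 1)
      ≤ Fintype.card (ZMod (m + 1)) - 1 + ∏ k, J k * x k * x (k + 1) :=
        sum_le_card_sub_one_add_prod _ hbond
    _ = (m + 1 : ℕ) - 1 + ∏ k, J k := by rw [ZMod.card, prod_mul_mul_add_eq_prod J x hxx]

theorem stmt14 (n : ℕ) [NeZero n]
    (J : ZMod n → ℝ) (hJ : ∀ k, J k = 1 ∨ J k = -1) :
    ((∏ k : ZMod n, J k) = 1 →
      sSup {c : ℝ | ∃ x : ZMod n → ℝ, (∀ k, x k = 1 ∨ x k = -1) ∧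
          c = ∑ k : ZMod n, J k * x k * x (k + 1)} = n) ∧
    ((∏ k : ZMod n, J k) = -1 →
      sSup {c : ℝ | ∃ x : ZMod n → ℝ, (∀ k, x k = 1 ∨ x k = -1) ∧
          c = ∑ k : ZMod n, J k * x k * x (k + 1)} = n - 2) := by
  rw [(isGreatest_cycle_energy n J fun k => mul_self_eq_one_iff.2 (hJ k)).csSup_eq]
  exact ⟨fun h => by rw [h]; ring, fun h => by rw [h]; ring⟩
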